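/- Fix agents N = {1,…,5}, houses H = {h1,…,h5}, endowments e(1) = ½δ_{h1} + ½δ_{h2}, e(2) = ½δ_{h3} + ½δ_{h5}, e(3) = ½δ_{h1} + ½δ_{h4}, e(4) = ½δ_{h2} + ½δ_{h4}, e(5) = ½δ_{h3} + ½δ_{h5}, and the linear-order profile given by: agent 1: h1 ≻ h3 ≻ h2 ≻ h4 ≻ h5; agent 2: h5 ≻ h1 ≻ h2 ≻ h3 ≻ h4; agent 3: h1 ≻ h4 ≻ h2 ≻ h3 ≻ h5; agent 4: h2 ≻ h4 ≻ h1 ≻ h3 ≻ h5; agent 5: h5 ≻ h3 ≻ h1 ≻ h2 ≻ h4. Then the unique assignment that is SD-individually rational and SD-efficient with respect to this profile is x with x(1) = ½δ_{h1} + ½δ_{h3}, x(2) = ½δ_{h2} + ½δ_{h5}, x(3) = ½δ_{h1} + ½δ_{h4}, x(4) = ½δ_{h2} + ½δ_{h4}, x(5) = ½δ_{h3} + ½δ_{h5}. -/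
import Mathlib


open Finset
open scoped Classical

variable {N H : Type*}

noncomputable section

/-- The total weight that allocation `p` puts on houses weakly preferred to `h`
(with respect to the preference relation `R`, where `R a b` means `a ≿ b`). -/
def upperSum [Fintype H] (R : H → H → Prop) (p : H → ℝ) (h : H) : ℝ :=
  ∑ h' ∈ Finset.univ.filter (fun h' => R h' h), p h'

/-- `p ≿^SD q` (stochastic dominance). -/
def SDge [Fintype H] (R : H → H → Prop) (p q : H → ℝ) : Prop :=
  ∀ h, upperSum R q h ≤ upperSum R p h

/-- `p ≻^SD q`. -/
def SDgt [Fintype H] (R : H → H → Prop) (p q : H → ℝ) : Prop :=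
  SDge R p q ∧ ¬ SDge R q p

/-- Total weight that `p` puts on the indifference class of `h`. -/
def classSum [Fintype H] (R : H → H → Prop) (p : H → ℝ) (h : H) : ℝ :=
  ∑ h' ∈ Finset.univ.filter (fun h' => R h' h ∧ R h h'), p h'

/-- `p ~^DL q`: all indifference-class sums agree. -/
def DLsim [Fintype H] (R : H → H → Prop) (p q : H → ℝ) : Prop :=
  ∀ h, classSum R p h = classSum R q h

/-- `p ≻^DL q`: there is an indifference class (represented by a house `h`) on which
`p` puts strictly more weight, while all strictly more preferred classes have equal sums. -/
def DLgt [Fintype H] (R : H → H → Prop) (p q : H → ℝ) : Prop :=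
  ∃ h, classSum R q h < classSum R p h ∧
    ∀ h', R h' h ∧ ¬ R h h' → classSum R p h' = classSum R q h'

/-- `p ≿^DL q`. -/
def DLge [Fintype H] (R : H → H → Prop) (p q : H → ℝ) : Prop :=
  DLgt R p q ∨ DLsim R p q

/-- An allocation is a nonnegative function on houses. -/
def IsAlloc (p : H → ℝ) : Prop := ∀ h, 0 ≤ p h

/-- A preference is a total preorder (total and transitive relation). -/
def TotalPreorderRel (R : H → H → Prop) : Prop := Total R ∧ Transitive R

/-- An assignment with respect to endowments `e`. -/
def IsAssignment [Fintype N] (e x : N → H → ℝ) : Prop :=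
  (∀ i, IsAlloc (x i)) ∧ ∀ h, ∑ i, x i h = ∑ i, e i h

/-- SD-efficiency. -/
def SDEfficient [Fintype N] [Fintype H] (R : N → H → H → Prop) (e x : N → H → ℝ) : Prop :=
  ¬ ∃ y, IsAssignment e y ∧ (∀ i, SDge (R i) (y i) (x i)) ∧ ∃ i, SDgt (R i) (y i) (x i)

/-- SD individual rationality. -/
def SDIR [Fintype H] (R : N → H → H → Prop) (e x : N → H → ℝ) : Prop :=
  ∀ i, SDge (R i) (x i) (e i)

/-- SD core stability. -/
def SDCoreStable [Fintype N] [Fintype H] (R : N → H → H → Prop) (e x : N → H → ℝ) : Prop :=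
  ¬ ∃ (S : Finset N) (y : N → H → ℝ), S.Nonempty ∧ (∀ i ∈ S, IsAlloc (y i)) ∧
      (∀ h, ∑ i ∈ S, y i h = ∑ i ∈ S, e i h) ∧ ∀ i ∈ S, SDgt (R i) (y i) (x i)

/-- SD strict core membership. -/
def SDStrictCore [Fintype N] [Fintype H] (R : N → H → H → Prop) (e x : N → H → ℝ) : Prop :=
  ¬ ∃ (S : Finset N) (y : N → H → ℝ), S.Nonempty ∧ (∀ i ∈ S, IsAlloc (y i)) ∧
      (∀ h, ∑ i ∈ S, y i h = ∑ i ∈ S, e i h) ∧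
      (∀ i ∈ S, SDge (R i) (y i) (x i)) ∧ ∃ i ∈ S, SDgt (R i) (y i) (x i)

/-- The allocation consisting of exactly one unit of house `h`. -/
def delta [DecidableEq H] (h : H) : H → ℝ := fun h' => if h' = h then 1 else 0

end

/-- A (strict) linear order relation: total, transitive and antisymmetric
(`R a b` means `a ≿ b`). -/
def LinOrderRel (R : H → H → Prop) : Prop := Total R ∧ Transitive R ∧ AntiSymmetric R

/-- Endowments: e(1) = ½δ₁+½δ₂, e(2) = ½δ₃+½δ₅, e(3) = ½δ₁+½δ₄,
e(4) = ½δ₂+½δ₄, e(5) = ½δ₃+½δ₅ (houses h1,…,h5 encoded as 0,…,4). -/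
noncomputable def e5 : Fin 5 → Fin 5 → ℝ :=
  ![![1/2, 1/2, 0, 0, 0],
    ![0, 0, 1/2, 0, 1/2],
    ![1/2, 0, 0, 1/2, 0],
    ![0, 1/2, 0, 1/2, 0],
    ![0, 0, 1/2, 0, 1/2]]

/-- Ranks (0 = best): agent 1: h1≻h3≻h2≻h4≻h5; agent 2: h5≻h1≻h2≻h3≻h4;
agent 3: h1≻h4≻h2≻h3≻h5; agent 4: h2≻h4≻h1≻h3≻h5; agent 5: h5≻h3≻h1≻h2≻h4. -/
def rank15 : Fin 5 → Fin 5 → ℕ :=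
  ![![0, 2, 1, 3, 4], ![1, 2, 3, 4, 0], ![0, 2, 3, 1, 4], ![2, 0, 3, 1, 4], ![2, 3, 1, 4, 0]]

/-- The preference profile. -/
def R15 (i : Fin 5) (h h' : Fin 5) : Prop := rank15 i h ≤ rank15 i h'

/-- The assignment x: x(1) = ½δ₁+½δ₃, x(2) = ½δ₂+½δ₅, and agents 3, 4, 5 keep
their endowments. -/
noncomputable def x15 : Fin 5 → Fin 5 → ℝ :=
  ![![1/2, 0, 1/2, 0, 0],
    ![0, 1/2, 0, 0, 1/2],
    ![1/2, 0, 0, 1/2, 0],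
    ![0, 1/2, 0, 1/2, 0],
    ![0, 0, 1/2, 0, 1/2]]


set_option maxHeartbeats 1000000

lemma upperSum_def5 (R : Fin 5 → Fin 5 → Prop) (p : Fin 5 → ℝ) (h : Fin 5) :
    upperSum R p h = (if R 0 h then p 0 else 0) + (if R 1 h then p 1 else 0) +
      (if R 2 h then p 2 else 0) + (if R 3 h then p 3 else 0) + (if R 4 h then p 4 else 0) := by
  classical
  rw [upperSum, Finset.sum_filter, Fin.sum_univ_five]

@[simp] lemma rank15_v00 : rank15 0 0 = 0 := rfl
@[simp] lemma rank15_v01 : rank15 0 1 = 2 := rfl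
@[simp] lemma rank15_v02 : rank15 0 2 = 1 := rfl
@[simp] lemma rank15_v03 : rank15 0 3 = 3 := rfl
@[simp] lemma rank15_v04 : rank15 0 4 = 4 := rfl
@[simp] lemma rank15_v10 : rank15 1 0 = 1 := rfl
@[simp] lemma rank15_v11 : rank15 1 1 = 2 := rfl
@[simp] lemma rank15_v12 : rank15 1 2 = 3 := rfl
@[simp] lemma rank15_v13 : rank15 1 3 = 4 := rfl
@[simp] lemma rank15_v14 : rank15 1 4 = 0 := rfl
@[simp] lemma rank15_v20 : rank15 2 0 = 0 := rfl
@[simp] lemma rank15_v21 : rank15 2 1 = 2 := rfl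
@[simp] lemma rank15_v22 : rank15 2 2 = 3 := rfl
@[simp] lemma rank15_v23 : rank15 2 3 = 1 := rfl
@[simp] lemma rank15_v24 : rank15 2 4 = 4 := rfl
@[simp] lemma rank15_v30 : rank15 3 0 = 2 := rfl
@[simp] lemma rank15_v31 : rank15 3 1 = 0 := rfl
@[simp] lemma rank15_v32 : rank15 3 2 = 3 := rfl
@[simp] lemma rank15_v33 : rank15 3 3 = 1 := rfl
@[simp] lemma rank15_v34 : rank15 3 4 = 4 := rfl
@[simp] lemma rank15_v40 : rank15 4 0 = 2 := rfl
@[simp] lemma rank15_v41 : rank15 4 1 = 3 := rfl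
@[simp] lemma rank15_v42 : rank15 4 2 = 1 := rfl
@[simp] lemma rank15_v43 : rank15 4 3 = 4 := rfl
@[simp] lemma rank15_v44 : rank15 4 4 = 0 := rfl
@[simp] lemma e5_v00 : e5 0 0 = 1/2 := rfl
@[simp] lemma e5_v01 : e5 0 1 = 1/2 := rfl
@[simp] lemma e5_v02 : e5 0 2 = 0 := rfl
@[simp] lemma e5_v03 : e5 0 3 = 0 := rfl
@[simp] lemma e5_v04 : e5 0 4 = 0 := rfl
@[simp] lemma e5_v10 : e5 1 0 = 0 := rfl
@[simp] lemma e5_v11 : e5 1 1 = 0 := rfl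
@[simp] lemma e5_v12 : e5 1 2 = 1/2 := rfl
@[simp] lemma e5_v13 : e5 1 3 = 0 := rfl
@[simp] lemma e5_v14 : e5 1 4 = 1/2 := rfl
@[simp] lemma e5_v20 : e5 2 0 = 1/2 := rfl
@[simp] lemma e5_v21 : e5 2 1 = 0 := rfl
@[simp] lemma e5_v22 : e5 2 2 = 0 := rfl
@[simp] lemma e5_v23 : e5 2 3 = 1/2 := rfl
@[simp] lemma e5_v24 : e5 2 4 = 0 := rfl
@[simp] lemma e5_v30 : e5 3 0 = 0 := rfl
@[simp] lemma e5_v31 : e5 3 1 = 1/2 := rfl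
@[simp] lemma e5_v32 : e5 3 2 = 0 := rfl
@[simp] lemma e5_v33 : e5 3 3 = 1/2 := rfl
@[simp] lemma e5_v34 : e5 3 4 = 0 := rfl
@[simp] lemma e5_v40 : e5 4 0 = 0 := rfl
@[simp] lemma e5_v41 : e5 4 1 = 0 := rfl
@[simp] lemma e5_v42 : e5 4 2 = 1/2 := rfl
@[simp] lemma e5_v43 : e5 4 3 = 0 := rfl
@[simp] lemma e5_v44 : e5 4 4 = 1/2 := rfl
@[simp] lemma x15_v00 : x15 0 0 = 1/2 := rfl
@[simp] lemma x15_v01 : x15 0 1 = 0 := rfl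
@[simp] lemma x15_v02 : x15 0 2 = 1/2 := rfl
@[simp] lemma x15_v03 : x15 0 3 = 0 := rfl
@[simp] lemma x15_v04 : x15 0 4 = 0 := rfl
@[simp] lemma x15_v10 : x15 1 0 = 0 := rfl
@[simp] lemma x15_v11 : x15 1 1 = 1/2 := rfl
@[simp] lemma x15_v12 : x15 1 2 = 0 := rfl
@[simp] lemma x15_v13 : x15 1 3 = 0 := rfl
@[simp] lemma x15_v14 : x15 1 4 = 1/2 := rfl
@[simp] lemma x15_v20 : x15 2 0 = 1/2 := rfl
@[simp] lemma x15_v21 : x15 2 1 = 0 := rfl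
@[simp] lemma x15_v22 : x15 2 2 = 0 := rfl
@[simp] lemma x15_v23 : x15 2 3 = 1/2 := rfl
@[simp] lemma x15_v24 : x15 2 4 = 0 := rfl
@[simp] lemma x15_v30 : x15 3 0 = 0 := rfl
@[simp] lemma x15_v31 : x15 3 1 = 1/2 := rfl
@[simp] lemma x15_v32 : x15 3 2 = 0 := rfl
@[simp] lemma x15_v33 : x15 3 3 = 1/2 := rfl
@[simp] lemma x15_v34 : x15 3 4 = 0 := rfl
@[simp] lemma x15_v40 : x15 4 0 = 0 := rfl
@[simp] lemma x15_v41 : x15 4 1 = 0 := rfl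
@[simp] lemma x15_v42 : x15 4 2 = 1/2 := rfl
@[simp] lemma x15_v43 : x15 4 3 = 0 := rfl
@[simp] lemma x15_v44 : x15 4 4 = 1/2 := rfl


/-- IR + feasibility pins down every coordinate in terms of `a := x 0 1`. -/
lemma family15 (x : Fin 5 → Fin 5 → ℝ) (hx : IsAssignment e5 x) (hir : SDIR R15 e5 x) :
    x 0 0 = 1/2 ∧ x 0 2 = 1/2 - x 0 1 ∧ x 0 3 = 0 ∧ x 0 4 = 0 ∧
    x 1 0 = 0 ∧ x 1 1 = 1/2 - x 0 1 ∧ x 1 2 = x 0 1 ∧ x 1 3 = 0 ∧ x 1 4 = 1/2 ∧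
    x 2 0 = 1/2 ∧ x 2 1 = 0 ∧ x 2 2 = 0 ∧ x 2 3 = 1/2 ∧ x 2 4 = 0 ∧
    x 3 0 = 0 ∧ x 3 1 = 1/2 ∧ x 3 2 = 0 ∧ x 3 3 = 1/2 ∧ x 3 4 = 0 ∧
    x 4 0 = 0 ∧ x 4 1 = 0 ∧ x 4 2 = 1/2 ∧ x 4 3 = 0 ∧ x 4 4 = 1/2 := by
  obtain ⟨hpos, hsum⟩ := hx
  have c0 := hsum 0
  have c1 := hsum 1
  have c2 := hsum 2
  have c3 := hsum 3
  have c4 := hsum 4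
  rw [Fin.sum_univ_five, Fin.sum_univ_five] at c0 c1 c2 c3 c4
  norm_num at c0 c1 c2 c3 c4
  have A1 := hir 0 0
  have A3 := hir 0 1
  have A5 := hir 0 4
  have B1 := hir 1 4
  have B4 := hir 1 2
  have B5 := hir 1 3
  have C1 := hir 2 0
  have C2 := hir 2 3
  have C5 := hir 2 4
  have D1 := hir 3 1
  have D2 := hir 3 3
  have D5 := hir 3 4
  have E1 := hir 4 4
  have E3 := hir 4 0
  have E5 := hir 4 3
  rw [upperSum_def5, upperSum_def5] at A1 A3 A5 B1 B4 B5 C1 C2 C5 D1 D2 D5 E1 E3 E5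
  norm_num [R15] at A1 A3 A5 B1 B4 B5 C1 C2 C5 D1 D2 D5 E1 E3 E5
  have n00 := hpos 0 0; have n01 := hpos 0 1; have n02 := hpos 0 2
  have n03 := hpos 0 3; have n04 := hpos 0 4
  have n10 := hpos 1 0; have n11 := hpos 1 1; have n12 := hpos 1 2
  have n13 := hpos 1 3; have n14 := hpos 1 4
  have n20 := hpos 2 0; have n21 := hpos 2 1; have n22 := hpos 2 2
  have n23 := hpos 2 3; have n24 := hpos 2 4
  have n30 := hpos 3 0; have n31 := hpos 3 1; have n32 := hpos 3 2
  have n33 := hpos 3 3; have n34 := hpos 3 4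
  have n40 := hpos 4 0; have n41 := hpos 4 1; have n42 := hpos 4 2
  have n43 := hpos 4 3; have n44 := hpos 4 4
  refine ⟨?_, ?_, ?_, ?_, ?_, ?_, ?_, ?_, ?_, ?_, ?_, ?_, ?_, ?_, ?_, ?_, ?_, ?_, ?_,
    ?_, ?_, ?_, ?_, ?_⟩ <;> linarith

lemma fin5_cases : ∀ i : Fin 5, i = 0 ∨ i = 1 ∨ i = 2 ∨ i = 3 ∨ i = 4 := by decide

lemma isAssignment_x15 : IsAssignment e5 x15 := by
  constructor
  · intro i h
    rcases fin5_cases i with rfl|rfl|rfl|rfl|rfl <;>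
      rcases fin5_cases h with rfl|rfl|rfl|rfl|rfl <;> norm_num
  · intro h
    rw [Fin.sum_univ_five, Fin.sum_univ_five]
    rcases fin5_cases h with rfl|rfl|rfl|rfl|rfl <;> norm_num

lemma sdir_x15 : SDIR R15 e5 x15 := by
  intro i h
  rw [upperSum_def5, upperSum_def5]
  rcases fin5_cases i with rfl|rfl|rfl|rfl|rfl <;>
    rcases fin5_cases h with rfl|rfl|rfl|rfl|rfl <;> norm_num [R15]

/-- `x15` is the unique SD-individually rational and SD-efficient
assignment for this profile. -/

theorem unique_ir_eff_assignment_profile15 :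
    (IsAssignment e5 x15 ∧ SDIR R15 e5 x15 ∧ SDEfficient R15 e5 x15) ∧
    ∀ x : Fin 5 → Fin 5 → ℝ, IsAssignment e5 x → SDIR R15 e5 x → SDEfficient R15 e5 x →
      x = x15 := by
  have main : ∀ x : Fin 5 → Fin 5 → ℝ, IsAssignment e5 x → SDIR R15 e5 x →
      (∀ i, SDge (R15 i) (x15 i) (x i)) ∧ (x 0 1 ≠ 0 → SDgt (R15 0) (x15 0) (x 0)) ∧
      (x 0 1 = 0 → x = x15) := by
    intro x hx hir
    obtain ⟨f1, f2, f3, f4, f5, f6, f7, f8, f9, f10, f11, f12, f13, f14, f15, f16, f17,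
      f18, f19, f20, f21, f22, f23, f24⟩ := family15 x hx hir
    have ha : 0 ≤ x 0 1 := hx.1 0 1
    have hdom : ∀ i, SDge (R15 i) (x15 i) (x i) := by
      intro i h
      rw [upperSum_def5, upperSum_def5]
      rcases fin5_cases i with rfl|rfl|rfl|rfl|rfl <;>
        rcases fin5_cases h with rfl|rfl|rfl|rfl|rfl <;> norm_num [R15] <;> linarith
    refine ⟨hdom, ?_, ?_⟩
    · intro hne
      refine ⟨hdom 0, fun hc => ?_⟩
      have := hc 2
      rw [upperSum_def5, upperSum_def5] at this
      norm_num [R15] at this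
      have : x 0 1 = 0 := by linarith
      exact hne this
    · intro h0
      funext i h
      rcases fin5_cases i with rfl|rfl|rfl|rfl|rfl <;>
        rcases fin5_cases h with rfl|rfl|rfl|rfl|rfl <;> norm_num <;> linarith
  have hIA : IsAssignment e5 x15 := isAssignment_x15
  have hIR : SDIR R15 e5 x15 := sdir_x15
  have hEff : SDEfficient R15 e5 x15 := by
    rintro ⟨y, hy, hge, i0, hgt⟩
    have hirY : SDIR R15 e5 y := fun i h => le_trans (hIR i h) (hge i h)
    obtain ⟨hdomY, _, hzeroY⟩ := main y hy hirY
    have h01 : y 0 1 = 0 := by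
      have h2 := hge 0 2
      have h1 := hdomY 0 1
      rw [upperSum_def5, upperSum_def5] at h2 h1
      norm_num [R15] at h2 h1
      have := hy.1 0 1
      linarith
    have hyx : y = x15 := hzeroY h01
    exact hgt.2 (by rw [hyx]; exact fun h => le_rfl)
  refine ⟨⟨hIA, hIR, hEff⟩, ?_⟩
  intro x hx hir heff
  obtain ⟨hdom, hstr, hzero⟩ := main x hx hir
  by_cases h01 : x 0 1 = 0
  · exact hzero h01
  · exact absurd ⟨x15, isAssignment_x15, hdom, 0, hstr h01⟩ heff
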